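/- Let σ > 0, q ∈ (0,1), L > 0, P_0, …, P_n : ℝ^d → ℝ differentiable with ⟨∇P_i(x) − ∇P_i(y), x − y⟩ ≥ σ‖x − y‖², h : ℝ^d → ℝ convex, ρ_i > 0, w̃⁰ ∈ ℝ^d, and let (w̃*, λ_i*, h*) be a KKT point (h* a subgradient of h at w̃*, ∇P_i(w̃*) + λ_i* = 0 for 1 ≤ i ≤ n, ∇P_0(w̃*) + h* − Σ_i λ_i* = 0). Suppose sequences (w^{t+1}), (u_i^t), (λ_i^t) satisfy the ADMM iterate conditions with initial point w̃⁰ and tolerances q^t, and additionally ‖∇P_i(w̃*) − ∇P_i(u_i^{t+1})‖ ≤ L‖w̃* − u_i^{t+1}‖ for all i and t. Define S_t = Σ_{i=1}^n ( (ρ_i/2)‖w̃* − u_i^t‖² + (1/(2ρ_i))‖λ_i* − λ_i^t‖² ), r = min_{1≤i≤n} σρ_i/(ρ_i² + 2L²), and q_r = max{q, 1/(1 + r)}. Then for all t ≥ 0, S_t ≤ q_r^t · ( S_0 + (1/(1 − q))·( (n+1)/(2σ) + Σ_{i=1}^n σ/(ρ_i² + 2L²) ) ). -/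

import Mathlib

/-!
Strong monotonicity of `∇P₀` and `∇Pᵢ`, tested between the KKT point and the inexact optimality
conditions of the iterates (Young's inequality absorbs the residuals of size `qᵗ`), together with
monotonicity of `∂h` and the dual update `λ⁺ = λ + ρ (u⁺ - w⁺)`, gives the descent
`S_{t+1} + ∑ σ/2 ‖w̃* - uᵢ^{t+1}‖² ≤ S_t + (n+1) q^{2t} / (2σ)`.
Since `λᵢ* - λᵢ^{t+1}` is within `qᵗ` of `∇Pᵢ(uᵢ^{t+1}) - ∇Pᵢ(w̃*)`, the Lipschitz bound controls
the dual half of `S_{t+1}` by its primal half: `r S_{t+1} ≤ ∑ σ/2 ‖w̃* - uᵢ^{t+1}‖² + O(q^{2t})`.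
Adding, `(1 + r) S_{t+1} ≤ S_t + q^{2t} C`, which unrolls to the geometric bound.
-/

open scoped RealInnerProductSpace

noncomputable def primalDualEnergy {E : Type*} [NormedAddCommGroup E] (ρ : ℝ) (x l : E) : ℝ :=
  ρ / 2 * ‖x‖ ^ 2 + 1 / (2 * ρ) * ‖l‖ ^ 2

theorem primalDualEnergy_nonneg {E : Type*} [NormedAddCommGroup E] {ρ : ℝ} (hρ : 0 < ρ)
    (x l : E) : 0 ≤ primalDualEnergy ρ x l := by
  unfold primalDualEnergy; positivity

theorem mul_primalDualEnergy_le {E : Type*} [NormedAddCommGroup E] {F : E → E}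
    {ρ σ L r ε : ℝ} (hρ : 0 < ρ) (hr₀ : 0 ≤ r) (hr : r ≤ σ * ρ / (ρ ^ 2 + 2 * L ^ 2)) {x x' l l' : E}
    (hLip : ‖F x - F x'‖ ≤ L * ‖x - x'‖) (hx : F x + l = 0) (hx' : ‖F x' + l'‖ ≤ ε) :
    r * primalDualEnergy ρ (x - x') (l - l') ≤
      σ / 2 * ‖x - x'‖ ^ 2 + σ / (ρ ^ 2 + 2 * L ^ 2) * ε ^ 2 := by
  have hl : ‖l - l'‖ ≤ L * ‖x - x'‖ + ε := by
    rw [show l - l' = -(F x - F x') - (F x' + l') by rw [eq_neg_of_add_eq_zero_right hx]; abel]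
    exact (norm_sub_le _ _).trans (by rw [norm_neg]; exact add_le_add hLip hx')
  have hl_sq : ‖l - l'‖ ^ 2 ≤ 2 * L ^ 2 * ‖x - x'‖ ^ 2 + 2 * ε ^ 2 := by
    nlinarith [pow_le_pow_left₀ (norm_nonneg _) hl 2, sq_nonneg (L * ‖x - x'‖ - ε)]
  have hD : 0 < ρ ^ 2 + 2 * L ^ 2 := by positivity
  set D := ρ ^ 2 + 2 * L ^ 2
  have hsplit : (D * ‖x - x'‖ ^ 2 + 2 * ε ^ 2) / (2 * ρ)
      = ρ / 2 * ‖x - x'‖ ^ 2 + 1 / (2 * ρ) * (2 * L ^ 2 * ‖x - x'‖ ^ 2 + 2 * ε ^ 2) := by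
    field_simp; ring
  calc r * primalDualEnergy ρ (x - x') (l - l')
      ≤ r * ((D * ‖x - x'‖ ^ 2 + 2 * ε ^ 2) / (2 * ρ)) := by
        unfold primalDualEnergy
        rw [hsplit]
        gcongr
    _ ≤ σ * ρ / D * ((D * ‖x - x'‖ ^ 2 + 2 * ε ^ 2) / (2 * ρ)) := by gcongr
    _ = σ / 2 * ‖x - x'‖ ^ 2 + σ / D * ε ^ 2 := by field_simp

section InnerProductSpace

variable {E : Type*} [NormedAddCommGroup E] [InnerProductSpace ℝ E]

theorem real_inner_le_sq_div_add_of_norm_le {σ ε : ℝ} (hσ : 0 < σ) {x : E} (hx : ‖x‖ ≤ ε)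
    (y : E) : ⟪x, y⟫ ≤ ε ^ 2 / (2 * σ) + σ / 2 * ‖y‖ ^ 2 := by
  have hamgm : ‖x‖ * ‖y‖ ≤ ‖x‖ ^ 2 / (2 * σ) + σ / 2 * ‖y‖ ^ 2 := by
    have hsq : ‖x‖ ^ 2 / (2 * σ) + σ / 2 * ‖y‖ ^ 2 - ‖x‖ * ‖y‖
        = (‖x‖ - σ * ‖y‖) ^ 2 / (2 * σ) := by
      field_simp; ring
    have : 0 ≤ (‖x‖ - σ * ‖y‖) ^ 2 / (2 * σ) := by positivity
    linarith
  calc ⟪x, y⟫ ≤ ‖x‖ * ‖y‖ := real_inner_le_norm x y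
    _ ≤ ‖x‖ ^ 2 / (2 * σ) + σ / 2 * ‖y‖ ^ 2 := hamgm
    _ ≤ ε ^ 2 / (2 * σ) + σ / 2 * ‖y‖ ^ 2 := by gcongr

theorem inner_sub_nonneg_of_subgradient {f : E → ℝ} {x x' g g' : E}
    (hg : ∀ y, f x + ⟪g, y - x⟫ ≤ f y) (hg' : ∀ y, f x' + ⟪g', y - x'⟫ ≤ f y) :
    0 ≤ ⟪g - g', x - x'⟫ := by
  have h₁ := hg x'
  have h₂ := hg' x
  rw [← neg_sub x x', inner_neg_right] at h₁
  rw [inner_sub_left]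
  linarith

theorem half_mul_norm_sq_le_of_strongly_monotone {F : E → E} {σ ε : ℝ} (hσ : 0 < σ)
    (hF : ∀ x y, σ * ‖x - y‖ ^ 2 ≤ ⟪F x - F y, x - y⟫) {x y a b : E}
    (hx : ‖F x + a‖ ≤ ε) (hy : F y + b = 0) :
    σ / 2 * ‖x - y‖ ^ 2 ≤ ε ^ 2 / (2 * σ) + ⟪b - a, x - y⟫ := by
  have hsplit : F x - F y = (F x + a) + (b - a) := by
    rw [eq_neg_of_add_eq_zero_left hy]; abel
  have hmono := hF x y
  rw [hsplit, inner_add_left] at hmono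
  linarith [real_inner_le_sq_div_add_of_norm_le hσ hx (x - y)]

theorem inner_add_inner_le_primalDualEnergy_sub {ρ : ℝ} (hρ : 0 < ρ) {u u' w' l l' ws ls : E}
    (hl : l' = l + ρ • (u' - w')) :
    ⟪ls - l', u' - ws⟫ + ⟪l' - ls - ρ • (u' - u), w' - ws⟫ ≤
      primalDualEnergy ρ (ws - u) (ls - l) - primalDualEnergy ρ (ws - u') (ls - l') := by
  have hw' : w' = u' - ρ⁻¹ • (l' - l) := by
    rw [hl, add_sub_cancel_left, smul_smul, inv_mul_cancel₀ hρ.ne', one_smul]; abel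
  subst hw'
  have hdefect : primalDualEnergy ρ (ws - u) (ls - l) - primalDualEnergy ρ (ws - u') (ls - l')
      - (⟪ls - l', u' - ws⟫ + ⟪l' - ls - ρ • (u' - u), u' - ρ⁻¹ • (l' - l) - ws⟫)
      = 1 / (2 * ρ) * ‖(l' - l) - ρ • (u' - u)‖ ^ 2 := by
    unfold primalDualEnergy
    rw [show ws - u = (ws - u') + (u' - u) by abel, show ls - l = (ls - l') + (l' - l) by abel,
      show u' - ρ⁻¹ • (l' - l) - ws = -(ws - u') - ρ⁻¹ • (l' - l) by abel,
      show l' - ls = -(ls - l') by abel, show u' - ws = -(ws - u') by abel]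
    generalize ws - u' = a, u' - u = b, ls - l' = c, l' - l = e
    simp only [norm_add_sq_real, norm_sub_sq_real, inner_sub_left, inner_sub_right,
      inner_neg_left, inner_neg_right, real_inner_smul_right, norm_smul, Real.norm_eq_abs,
      abs_of_pos hρ, mul_pow, real_inner_comm a, real_inner_comm e]
    field_simp
    ring
  have : 0 ≤ 1 / (2 * ρ) * ‖(l' - l) - ρ • (u' - u)‖ ^ 2 := by positivity
  linarith

theorem admm_energy_descent {ι : Type*} [Fintype ι] {σ ε : ℝ} (hσ : 0 < σ) {ρ : ι → ℝ}
    (hρ : ∀ i, 0 < ρ i) {f : E → ℝ} {F₀ : E → E} {F : ι → E → E}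
    (hF₀ : ∀ x y, σ * ‖x - y‖ ^ 2 ≤ ⟪F₀ x - F₀ y, x - y⟫)
    (hF : ∀ i x y, σ * ‖x - y‖ ^ 2 ≤ ⟪F i x - F i y, x - y⟫)
    {ws gs : E} {ls : ι → E} (hgs : ∀ y, f ws + ⟪gs, y - ws⟫ ≤ f y)
    (hKKT₁ : ∀ i, F i ws + ls i = 0) (hKKT₂ : F₀ ws + gs - ∑ i, ls i = 0)
    {w' g' : E} {u u' l l' : ι → E} (hl : ∀ i, l' i = l i + ρ i • (u' i - w'))
    (hg' : ∀ y, f w' + ⟪g', y - w'⟫ ≤ f y)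
    (hserver : ‖F₀ w' + g' + ∑ i, (ρ i • (u' i - u i) - l' i)‖ ≤ ε)
    (hclient : ∀ i, ‖F i (u' i) + l' i‖ ≤ ε) :
    ∑ i, primalDualEnergy (ρ i) (ws - u' i) (ls i - l' i) + ∑ i, σ / 2 * ‖ws - u' i‖ ^ 2 ≤
      ∑ i, primalDualEnergy (ρ i) (ws - u i) (ls i - l i) +
        (Fintype.card ι + 1) * (ε ^ 2 / (2 * σ)) := by
  have hserver' := half_mul_norm_sq_le_of_strongly_monotone hσ hF₀ (x := w') (y := ws) (ε := ε)
    (a := g' + ∑ i, (ρ i • (u' i - u i) - l' i)) (b := gs - ∑ i, ls i)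
    (by rwa [← add_assoc]) (by rwa [← add_sub_assoc])
  have hsplit : gs - ∑ i, ls i - (g' + ∑ i, (ρ i • (u' i - u i) - l' i))
      = -(g' - gs) + ∑ i, (l' i - ls i - ρ i • (u' i - u i)) := by
    simp only [Finset.sum_sub_distrib]; abel
  rw [hsplit, inner_add_left, inner_neg_left, sum_inner] at hserver'
  have hsubgrad := inner_sub_nonneg_of_subgradient hg' hgs
  have hclient' : ∀ i, σ / 2 * ‖ws - u' i‖ ^ 2 + ⟪l' i - ls i - ρ i • (u' i - u i), w' - ws⟫ ≤
      ε ^ 2 / (2 * σ) + (primalDualEnergy (ρ i) (ws - u i) (ls i - l i) -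
        primalDualEnergy (ρ i) (ws - u' i) (ls i - l' i)) := fun i => by
    have hi := half_mul_norm_sq_le_of_strongly_monotone hσ (hF i) (hclient i) (hKKT₁ i)
    rw [norm_sub_rev] at hi
    linarith [inner_add_inner_le_primalDualEnergy_sub (hρ i) (ws := ws) (ls := ls i) (u := u i)
      (hl i)]
  have hsum := Finset.sum_le_sum fun i (_ : i ∈ Finset.univ) => hclient' i
  simp only [Finset.sum_add_distrib, Finset.sum_sub_distrib, Finset.sum_const,
    Finset.card_univ, nsmul_eq_mul] at hsum
  have : 0 ≤ σ / 2 * ‖w' - ws‖ ^ 2 := by positivity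
  linarith

end InnerProductSpace

theorem le_pow_mul_add_geom_sum {S : ℕ → ℝ} {q a C : ℝ} (hq : 0 ≤ q) (hqa : q ≤ a)
    (hC : 0 ≤ C) (hstep : ∀ t, S (t + 1) ≤ a * (S t + (q ^ t) ^ 2 * C)) (t : ℕ) :
    S t ≤ a ^ t * (S 0 + C * ∑ k ∈ Finset.range t, q ^ k) := by
  induction t with
  | zero => simp
  | succ t ih =>
    have hqt : (q ^ t) ^ 2 ≤ a ^ t * q ^ t := by
      rw [sq]; gcongr
    calc S (t + 1) ≤ a * (S t + (q ^ t) ^ 2 * C) := hstep t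
      _ ≤ a * (a ^ t * (S 0 + C * ∑ k ∈ Finset.range t, q ^ k) + a ^ t * q ^ t * C) := by
        gcongr
        exact hq.trans hqa
      _ = a ^ (t + 1) * (S 0 + C * ∑ k ∈ Finset.range (t + 1), q ^ k) := by
        rw [Finset.sum_range_succ]; ring

theorem le_pow_mul_of_one_add_mul_le {S : ℕ → ℝ} {q r C : ℝ} (hq₀ : 0 ≤ q) (hq₁ : q < 1)
    (hr : 0 ≤ r) (hC : 0 ≤ C) (hS : ∀ t, 0 ≤ S t)
    (hstep : ∀ t, (1 + r) * S (t + 1) ≤ S t + (q ^ t) ^ 2 * C) (t : ℕ) :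
    S t ≤ max q (1 / (1 + r)) ^ t * (S 0 + 1 / (1 - q) * C) := by
  have hstep' : ∀ t, S (t + 1) ≤ max q (1 / (1 + r)) * (S t + (q ^ t) ^ 2 * C) := fun t => by
    calc S (t + 1) ≤ 1 / (1 + r) * (S t + (q ^ t) ^ 2 * C) := by
          rw [one_div_mul_eq_div, le_div_iff₀ (by linarith), mul_comm]; exact hstep t
      _ ≤ max q (1 / (1 + r)) * (S t + (q ^ t) ^ 2 * C) := by
          gcongr
          · exact add_nonneg (hS t) (by positivity)
          · exact le_max_right _ _
  have hgeom : ∑ k ∈ Finset.range t, q ^ k ≤ 1 / (1 - q) := by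
    simpa using geom_sum_Ico_le_of_lt_one (m := 0) (n := t) hq₀ hq₁
  calc S t ≤ max q (1 / (1 + r)) ^ t * (S 0 + C * ∑ k ∈ Finset.range t, q ^ k) :=
        le_pow_mul_add_geom_sum hq₀ (le_max_left _ _) hC hstep' t
    _ ≤ max q (1 / (1 + r)) ^ t * (S 0 + 1 / (1 - q) * C) := by
        rw [mul_comm C]
        gcongr

theorem stmt_13_general {d : ℕ} (n : ℕ) (σ q L : ℝ) (hσ : 0 < σ)
    (hq0 : 0 < q) (hq1 : q < 1)
    (P0' : EuclideanSpace ℝ (Fin d) → EuclideanSpace ℝ (Fin d))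
    (P' : Fin n → EuclideanSpace ℝ (Fin d) → EuclideanSpace ℝ (Fin d))
    (hmono0 : ∀ x y, σ * ‖x - y‖ ^ 2 ≤ ⟪P0' x - P0' y, x - y⟫)
    (hmono : ∀ i, ∀ x y, σ * ‖x - y‖ ^ 2 ≤ ⟪P' i x - P' i y, x - y⟫)
    (h : EuclideanSpace ℝ (Fin d) → ℝ)
    (ρ : Fin n → ℝ) (hρ : ∀ i, 0 < ρ i)
    -- KKT point
    (wstar : EuclideanSpace ℝ (Fin d)) (lamstar : Fin n → EuclideanSpace ℝ (Fin d))
    (hstar : EuclideanSpace ℝ (Fin d))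
    (hsubstar : ∀ y, h wstar + ⟪hstar, y - wstar⟫ ≤ h y)
    (hKKT1 : ∀ i, P' i wstar + lamstar i = 0)
    (hKKT2 : P0' wstar + hstar - ∑ i, lamstar i = 0)
    -- ADMM iterate conditions with initial point w̃⁰ and tolerances q^t
    (w : ℕ → EuclideanSpace ℝ (Fin d)) (u lam : Fin n → ℕ → EuclideanSpace ℝ (Fin d))
    (hlam : ∀ i, ∀ t : ℕ, lam i (t + 1) = lam i t + ρ i • (u i (t + 1) - w (t + 1)))
    (hserver : ∀ t : ℕ, ∃ ht1 : EuclideanSpace ℝ (Fin d),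
      (∀ y, h (w (t + 1)) + ⟪ht1, y - w (t + 1)⟫ ≤ h y) ∧
      ‖P0' (w (t + 1)) + ht1 +
        ∑ i, (ρ i • (u i (t + 1) - u i t) - lam i (t + 1))‖ ≤ q ^ t)
    (hclient : ∀ i, ∀ t : ℕ, ‖P' i (u i (t + 1)) + lam i (t + 1)‖ ≤ q ^ t)
    -- Lipschitz bound at the client iterates
    (hLip : ∀ i, ∀ t : ℕ, ‖P' i wstar - P' i (u i (t + 1))‖ ≤ L * ‖wstar - u i (t + 1)‖)
    -- potential, contraction factor
    (S : ℕ → ℝ)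
    (hS : ∀ t, S t = ∑ i, ((ρ i / 2) * ‖wstar - u i t‖ ^ 2 +
      (1 / (2 * ρ i)) * ‖lamstar i - lam i t‖ ^ 2))
    (r : ℝ) (hr : r = ⨅ i : Fin n, σ * ρ i / (ρ i ^ 2 + 2 * L ^ 2)) :
    ∀ t : ℕ, S t ≤ (max q (1 / (1 + r))) ^ t *
      (S 0 + (1 / (1 - q)) * (((n : ℝ) + 1) / (2 * σ) +
        ∑ i, σ / (ρ i ^ 2 + 2 * L ^ 2))) := by
  have hr₀ : 0 ≤ r := hr ▸ Real.iInf_nonneg fun i => by have := hρ i; positivity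
  have hr_le : ∀ i, r ≤ σ * ρ i / (ρ i ^ 2 + 2 * L ^ 2) := fun i =>
    hr ▸ ciInf_le (Set.finite_range _).bddBelow i
  have hS' : ∀ t, S t = ∑ i, primalDualEnergy (ρ i) (wstar - u i t) (lamstar i - lam i t) := hS
  refine le_pow_mul_of_one_add_mul_le hq0.le hq1 hr₀ (by positivity)
    (fun t => hS' t ▸ Finset.sum_nonneg fun i _ => primalDualEnergy_nonneg (hρ i) _ _) fun t => ?_
  obtain ⟨g, hg, hres⟩ := hserver t
  have hdescent := admm_energy_descent hσ hρ hmono0 hmono hsubstar hKKT1 hKKT2 (hlam · t) hg hres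
    (hclient · t)
  have hdual := Finset.sum_le_sum fun i (_ : i ∈ Finset.univ) =>
    mul_primalDualEnergy_le (hρ i) hr₀ (hr_le i) (hLip i t) (hKKT1 i) (hclient i t)
  rw [hS' t, hS' (t + 1)]
  simp only [Finset.sum_add_distrib, ← Finset.mul_sum, ← Finset.sum_mul, Fintype.card_fin]
    at hdescent hdual ⊢
  linear_combination hdescent + hdual

/-- Lemma 4.3 (geometric decay of the ADMM potential): under the ADMM iterate
conditions with initial point `w̃⁰` and tolerances `q^t`, plus the Lipschitz bound
`‖∇P_i(w̃*) − ∇P_i(u_i^{t+1})‖ ≤ L‖w̃* − u_i^{t+1}‖`, with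
`S_t = Σ_i ((ρ_i/2)‖w̃* − u_i^t‖² + (1/2ρ_i)‖λ_i* − λ_i^t‖²)`,
`r = min_i σρ_i/(ρ_i² + 2L²)` and `q_r = max{q, 1/(1+r)}`, we have
`S_t ≤ q_r^t (S_0 + (1/(1−q))((n+1)/(2σ) + Σ_i σ/(ρ_i² + 2L²)))` for all `t`. -/
theorem stmt_13 {d : ℕ} (n : ℕ) (hn : 1 ≤ n) (σ q L : ℝ) (hσ : 0 < σ)
    (hq0 : 0 < q) (hq1 : q < 1) (hL : 0 < L)
    (P0 : EuclideanSpace ℝ (Fin d) → ℝ) (P0' : EuclideanSpace ℝ (Fin d) → EuclideanSpace ℝ (Fin d))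
    (hP0 : ∀ x, HasGradientAt P0 (P0' x) x)
    (P : Fin n → EuclideanSpace ℝ (Fin d) → ℝ)
    (P' : Fin n → EuclideanSpace ℝ (Fin d) → EuclideanSpace ℝ (Fin d))
    (hP : ∀ i x, HasGradientAt (P i) (P' i x) x)
    (hmono0 : ∀ x y, σ * ‖x - y‖ ^ 2 ≤ ⟪P0' x - P0' y, x - y⟫)
    (hmono : ∀ i, ∀ x y, σ * ‖x - y‖ ^ 2 ≤ ⟪P' i x - P' i y, x - y⟫)
    (h : EuclideanSpace ℝ (Fin d) → ℝ) (hh : ConvexOn ℝ Set.univ h)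
    (ρ : Fin n → ℝ) (hρ : ∀ i, 0 < ρ i)
    -- KKT point
    (wstar : EuclideanSpace ℝ (Fin d)) (lamstar : Fin n → EuclideanSpace ℝ (Fin d))
    (hstar : EuclideanSpace ℝ (Fin d))
    (hsubstar : ∀ y, h wstar + ⟪hstar, y - wstar⟫ ≤ h y)
    (hKKT1 : ∀ i, P' i wstar + lamstar i = 0)
    (hKKT2 : P0' wstar + hstar - ∑ i, lamstar i = 0)
    -- ADMM iterate conditions with initial point w̃⁰ and tolerances q^t
    (w0 : EuclideanSpace ℝ (Fin d))
    (w : ℕ → EuclideanSpace ℝ (Fin d)) (u lam : Fin n → ℕ → EuclideanSpace ℝ (Fin d))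
    (hinit_u : ∀ i, u i 0 = w0) (hinit_lam : ∀ i, lam i 0 = -P' i w0)
    (hlam : ∀ i, ∀ t : ℕ, lam i (t + 1) = lam i t + ρ i • (u i (t + 1) - w (t + 1)))
    (hserver : ∀ t : ℕ, ∃ ht1 : EuclideanSpace ℝ (Fin d),
      (∀ y, h (w (t + 1)) + ⟪ht1, y - w (t + 1)⟫ ≤ h y) ∧
      ‖P0' (w (t + 1)) + ht1 +
        ∑ i, (ρ i • (u i (t + 1) - u i t) - lam i (t + 1))‖ ≤ q ^ t)
    (hclient : ∀ i, ∀ t : ℕ, ‖P' i (u i (t + 1)) + lam i (t + 1)‖ ≤ q ^ t)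
    -- Lipschitz bound at the client iterates
    (hLip : ∀ i, ∀ t : ℕ, ‖P' i wstar - P' i (u i (t + 1))‖ ≤ L * ‖wstar - u i (t + 1)‖)
    -- potential, contraction factor
    (S : ℕ → ℝ)
    (hS : ∀ t, S t = ∑ i, ((ρ i / 2) * ‖wstar - u i t‖ ^ 2 +
      (1 / (2 * ρ i)) * ‖lamstar i - lam i t‖ ^ 2))
    (r : ℝ) (hr : r = ⨅ i : Fin n, σ * ρ i / (ρ i ^ 2 + 2 * L ^ 2)) :
    ∀ t : ℕ, S t ≤ (max q (1 / (1 + r))) ^ t *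
      (S 0 + (1 / (1 - q)) * (((n : ℝ) + 1) / (2 * σ) +
        ∑ i, σ / (ρ i ^ 2 + 2 * L ^ 2))) :=
  stmt_13_general n σ q L hσ hq0 hq1 P0' P' hmono0 hmono h ρ hρ wstar lamstar hstar hsubstar hKKT1
    hKKT2 w u lam hlam hserver hclient hLip S hS r hr
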